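/- arXiv:0911.0342 — 2 statements merged into one kernel-verified Lean document; each statement's English description precedes it below -/
import Mathlib

section
/- Let λ be a 2-singular partition, a maximal with λ_{a-1} = λ_a > 0, and e > 1. If λ is an e-core (no hook length divisible by e), then λ_a ≤ e - 2. -/
/-!
Rows `a - 1` and `a` have equal length, so the hook lengths in row `a - 1` are those of row `a`
shifted by one. Along row `a` the hook length ends at `1` (by maximality of `a`, every row below
is strictly shorter than row `a`) and, reading leftwards, grows by at most `2` per column (the
parts below row `a` are distinct, so a column is at most one box longer than the next one).
Hence the hook lengths of the two rows fill up `1, …, h(a, 1) + 1 ⊇ 1, …, μ_a + 1`, and an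
`e`-core must have `e > μ_a + 1`.
-/

/-- A partition: weakly decreasing sequence of non-negative integers (indexed from 1,
with the convention `μ 0 = 0`), with finitely many nonzero terms. -/
def IsPartition (μ : ℕ → ℕ) : Prop :=
  μ 0 = 0 ∧ (∀ i, 1 ≤ i → μ (i + 1) ≤ μ i) ∧ ∃ N, ∀ i, N ≤ i → μ i = 0

/-- The conjugate partition: `conj μ j = |{i ≥ 1 : μ i ≥ j}|`. -/
noncomputable def conj (μ : ℕ → ℕ) (j : ℕ) : ℕ :=
  Nat.card {i : ℕ // 1 ≤ i ∧ j ≤ μ i}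

/-- `(i,j)` is a node of the Young diagram of `μ`. -/
def IsNode (μ : ℕ → ℕ) (i j : ℕ) : Prop := 1 ≤ i ∧ 1 ≤ j ∧ j ≤ μ i

/-- The hook length `h_μ(i,j) = 1 + μ_i - j + μ'_j - i` (as an integer). -/
noncomputable def hook (μ : ℕ → ℕ) (i j : ℕ) : ℤ :=
  1 + (μ i : ℤ) - (j : ℤ) + (conj μ j : ℤ) - (i : ℤ)

/-- `μ` is broken: there exist `1 < c < d` with `μ_{c-1} - μ_c > 1` and `μ_{d-1} = μ_d > 0`. -/
def Broken (μ : ℕ → ℕ) : Prop :=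
  ∃ c d : ℕ, 1 < c ∧ c < d ∧ μ c + 1 < μ (c - 1) ∧ μ (d - 1) = μ d ∧ 0 < μ d

/-- `μ` is 2-singular: some `μ_i = μ_{i+1} > 0` (with `i ≥ 1`). -/
def TwoSingular (μ : ℕ → ℕ) : Prop := ∃ i : ℕ, 1 ≤ i ∧ μ i = μ (i + 1) ∧ 0 < μ i

/-- `μ` is an `e`-core: no hook length is divisible by `e`. -/
def IsECore (e : ℕ) (μ : ℕ → ℕ) : Prop :=
  ∀ i j : ℕ, IsNode μ i j → ¬ (e : ℤ) ∣ hook μ i j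

/-- `μ` is an `e`-JM partition. -/
def IsJM (e : ℕ) (μ : ℕ → ℕ) : Prop :=
  ∀ i j : ℕ, IsNode μ i j → (e : ℤ) ∣ hook μ i j →
    (∀ k, 1 ≤ k → k ≤ μ i → (e : ℤ) ∣ hook μ i k) ∨
    (∀ k, 1 ≤ k → k ≤ conj μ j → (e : ℤ) ∣ hook μ k j)

theorem exists_eq_or_add_one_eq_of_le_add_two (f : ℕ → ℤ) {n : ℕ} (hn : 1 ≤ n) (htop : f n = 1)
    (hstep : ∀ j, 1 ≤ j → j < n → f j ≤ f (j + 1) + 2) {m : ℤ} (hm : 1 ≤ m)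
    (hm' : m ≤ f 1 + 1) : ∃ j, 1 ≤ j ∧ j ≤ n ∧ (f j = m ∨ f j + 1 = m) := by
  suffices h : ∀ j ≤ n, 1 ≤ j → ∀ m, 1 ≤ m → m ≤ f j + 1 →
      ∃ k, 1 ≤ k ∧ k ≤ n ∧ (f k = m ∨ f k + 1 = m) from h 1 hn le_rfl m hm hm'
  intro j hjn
  induction hjn using Nat.decreasingInduction with
  | self => exact fun hn m _ hm' => ⟨n, hn, le_rfl, by omega⟩
  | of_succ j hjn ih =>
    intro hj m hm hm'
    by_cases hlow : m ≤ f (j + 1) + 1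
    · exact ih (by omega) m hm hlow
    · exact ⟨j, hj, hjn.le, by have := hstep j hj hjn; omega⟩

theorem conj_eq_ncard (μ : ℕ → ℕ) (j : ℕ) : conj μ j = {i | 1 ≤ i ∧ j ≤ μ i}.ncard :=
  Nat.card_coe_set_eq _

namespace IsPartition

variable {μ : ℕ → ℕ}

theorem antitone (hμ : IsPartition μ) {i j : ℕ} (hi : 1 ≤ i) (hij : i ≤ j) : μ j ≤ μ i := by
  induction j, hij using Nat.le_induction with
  | base => exact le_rfl
  | succ j hij ih => exact (hμ.2.1 j (hi.trans hij)).trans ih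

theorem finite_setOf_le (hμ : IsPartition μ) {j : ℕ} (hj : 1 ≤ j) :
    {i | 1 ≤ i ∧ j ≤ μ i}.Finite := by
  obtain ⟨N, hN⟩ := hμ.2.2
  refine (Set.finite_Iio N).subset fun i hi => ?_
  by_contra hiN
  have := hN i (not_lt.mp hiN)
  exact absurd hi.2 (by omega)

theorem lt_of_lt_of_pos (hμ : IsPartition μ) {a : ℕ}
    (hmax : ∀ i, a < i → ¬ (μ (i - 1) = μ i ∧ 0 < μ i)) {u v : ℕ} (hu : 1 ≤ u) (hau : a ≤ u)
    (huv : u < v) (hv : 0 < μ v) : μ v < μ u := by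
  have hle : μ v ≤ μ (u + 1) := hμ.antitone (by omega) huv
  have hne : ¬ (μ u = μ (u + 1) ∧ 0 < μ (u + 1)) := hmax (u + 1) (by omega)
  have hdrop : μ (u + 1) ≤ μ u := hμ.2.1 u hu
  omega

theorem subsingleton_setOf_eq (hμ : IsPartition μ) {a : ℕ}
    (hmax : ∀ i, a < i → ¬ (μ (i - 1) = μ i ∧ 0 < μ i)) {j : ℕ} (hj : 0 < j) (hja : j < μ a) :
    {i | 1 ≤ i ∧ μ i = j}.Subsingleton := by
  have below : ∀ u, 1 ≤ u → μ u = j → a < u := fun u hu huj =>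
    not_le.mp fun hua => absurd (hμ.antitone hu hua) (by omega)
  rintro u ⟨hu, huj⟩ v ⟨hv, hvj⟩
  rcases lt_trichotomy u v with huv | rfl | hvu
  · exact absurd (hμ.lt_of_lt_of_pos hmax hu (below u hu huj).le huv (by omega)) (by omega)
  · rfl
  · exact absurd (hμ.lt_of_lt_of_pos hmax hv (below v hv hvj).le hvu (by omega)) (by omega)

theorem conj_eq (hμ : IsPartition μ) {a j : ℕ} (hja : j ≤ μ a) (hlt : ∀ i, a < i → μ i < j) :
    conj μ j = a := by
  have hrows : {i | 1 ≤ i ∧ j ≤ μ i} = Set.Icc 1 a := by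
    ext i
    refine ⟨fun ⟨hi, hji⟩ => ⟨hi, ?_⟩, fun ⟨hi, hia⟩ => ⟨hi, hja.trans (hμ.antitone hi hia)⟩⟩
    by_contra hai
    exact absurd (hlt i (not_le.mp hai)) (not_lt.mpr hji)
  rw [conj_eq_ncard, hrows, Set.ncard_Icc_nat]
  omega

theorem le_conj (hμ : IsPartition μ) {a j : ℕ} (hj : 1 ≤ j) (hja : j ≤ μ a) : a ≤ conj μ j := by
  rw [conj_eq_ncard]
  calc a = (Set.Icc 1 a).ncard := by rw [Set.ncard_Icc_nat]; omega
    _ ≤ {i | 1 ≤ i ∧ j ≤ μ i}.ncard := Set.ncard_le_ncard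
        (fun i hi => ⟨hi.1, hja.trans (hμ.antitone hi.1 hi.2)⟩)
        (hμ.finite_setOf_le hj)

end IsPartition

theorem conj_le_conj_succ_add_one {μ : ℕ → ℕ} {j : ℕ}
    (hj : {i | 1 ≤ i ∧ μ i = j}.Subsingleton) : conj μ j ≤ conj μ (j + 1) + 1 := by
  have hsplit : {i | 1 ≤ i ∧ j ≤ μ i} = {i | 1 ≤ i ∧ μ i = j} ∪ {i | 1 ≤ i ∧ j + 1 ≤ μ i} := by
    ext i
    simp only [Set.mem_ofPred_eq, Set.mem_union]
    omega
  have hle_one : {i | 1 ≤ i ∧ μ i = j}.ncard ≤ 1 := (Set.ncard_le_one hj.finite).2 hj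
  have := Set.ncard_union_le {i | 1 ≤ i ∧ μ i = j} {i | 1 ≤ i ∧ j + 1 ≤ μ i}
  rw [conj_eq_ncard, conj_eq_ncard, hsplit]
  omega

theorem hook_le_hook_succ_add_two {μ : ℕ → ℕ} {i j : ℕ} (h : conj μ j ≤ conj μ (j + 1) + 1) :
    hook μ i j ≤ hook μ i (j + 1) + 2 := by
  simp only [hook]
  push_cast
  omega

theorem hook_pred_row {μ : ℕ → ℕ} {i : ℕ} (hi : 1 ≤ i) (h : μ (i - 1) = μ i) (j : ℕ) :
    hook μ (i - 1) j = hook μ i j + 1 := by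
  simp only [hook, h, Nat.cast_sub hi]
  ring

/-- If `μ` is 2-singular with `a` maximal such that `μ_{a-1} = μ_a > 0`, and `μ` is an
`e`-core with `e > 1`, then `μ_a ≤ e - 2`. -/
theorem repeated_part_le_of_core (μ : ℕ → ℕ) (a e : ℕ) (hμ : IsPartition μ)
    (ha2 : 2 ≤ a) (hrep : μ (a - 1) = μ a ∧ 0 < μ a)
    (hmax : ∀ i, a < i → ¬ (μ (i - 1) = μ i ∧ 0 < μ i))
    (he : 1 < e) (hcore : IsECore e μ) :
    μ a ≤ e - 2 := by
  obtain ⟨hrep, hpos⟩ := hrep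
  have hbelow : ∀ i, a < i → μ i < μ a := fun i hai =>
    (Nat.eq_zero_or_pos (μ i)).elim (by omega) (hμ.lt_of_lt_of_pos hmax (by omega) le_rfl hai)
  have hlast : hook μ a (μ a) = 1 := by
    simp only [hook, hμ.conj_eq le_rfl hbelow]
    ring
  have hfirst : (μ a : ℤ) ≤ hook μ a 1 := by
    have := hμ.le_conj le_rfl hpos
    simp only [hook]
    omega
  have hstep : ∀ j, 1 ≤ j → j < μ a → hook μ a j ≤ hook μ a (j + 1) + 2 := fun j hj hja =>
    hook_le_hook_succ_add_two (conj_le_conj_succ_add_one (hμ.subsingleton_setOf_eq hmax hj hja))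
  by_contra hlt
  obtain ⟨j, hj, hja, hhook | hhook⟩ := exists_eq_or_add_one_eq_of_le_add_two (hook μ a) hpos
    hlast hstep (m := e) (by omega) (by omega)
  · exact hcore a j ⟨by omega, hj, hja⟩ (hhook ▸ dvd_refl _)
  · exact hcore (a - 1) j ⟨by omega, hj, hrep ▸ hja⟩
      (by rw [hook_pred_row (by omega) hrep, hhook])
end

section
/- For each prime p, there are only finitely many partitions λ such that λ is unbroken, doubly-singular, and a 2p-core. -/
/-!
Let rows `r, r + 1` be the last pair of equal nonzero rows of `μ` and columns `j, j + 1` a pair of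
equal nonzero columns. Hook lengths along two equal adjacent lines come in pairs `x, x + 1`, and
successive pairs differ by at most `2` as long as the partition has no jump of size `≥ 2` in that
direction. Along rows `r, r + 1` this holds because no part below row `r + 1` repeats; along columns
`j, j + 1` within rows `1, …, r` it holds because `μ` is unbroken. Each of the two pairs of lines
therefore yields an interval of consecutive hook lengths, which in an `e`-core has fewer than `e`
elements. The two intervals together have at least `μ₁ + μ'₁ + 1` elements, so `μ` fits in a
`2e × 2e` box.
-/

def RepeatsAt (μ : ℕ → ℕ) (k : ℕ) : Prop := 1 ≤ k ∧ μ k = μ (k + 1) ∧ 0 < μ k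

def hookLengths (μ : ℕ → ℕ) : Set ℤ := {x | ∃ i j, IsNode μ i j ∧ hook μ i j = x}

lemma finite_setOf_forall_lt_and_eq_zero (N : ℕ) :
    {μ : ℕ → ℕ | ∀ i, μ i < N ∧ (N ≤ i → μ i = 0)}.Finite := by
  refine (Set.finite_range fun (f : Fin N → Fin N) (i : ℕ) =>
    if h : i < N then (f ⟨i, h⟩ : ℕ) else 0).subset fun μ hμ => ⟨fun i => ⟨μ i, (hμ i).1⟩, ?_⟩
  funext i
  by_cases h : i < N
  · simp [h]
  · simp [h, (hμ i).2 (not_lt.1 h)]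

lemma exists_eq_or_eq_add_one_of_le_add_two {f : ℕ → ℤ} {a b : ℕ} (hab : a ≤ b)
    (hstep : ∀ k, a ≤ k → k < b → f k ≤ f (k + 1) + 2) {x : ℤ} (hxb : f b ≤ x)
    (hxa : x ≤ f a + 1) : ∃ k, a ≤ k ∧ k ≤ b ∧ (x = f k ∨ x = f k + 1) := by
  induction b, hab using Nat.le_induction generalizing x with
  | base => exact ⟨a, le_rfl, le_rfl, by omega⟩
  | succ b hab ih =>
    by_cases hx : f b ≤ x
    · obtain ⟨k, hak, hkb, hk⟩ := ih (fun k hak hkb => hstep k hak (by omega)) hx hxa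
      exact ⟨k, hak, by omega, hk⟩
    · have := hstep b hab (by omega)
      exact ⟨b + 1, by omega, le_rfl, by omega⟩

namespace IsPartition

variable {μ : ℕ → ℕ}

lemma antitone_s10 (hP : IsPartition μ) {i k : ℕ} (hi : 1 ≤ i) (hik : i ≤ k) : μ k ≤ μ i := by
  induction k, hik using Nat.le_induction with
  | base => exact le_rfl
  | succ k hk ih => exact (hP.2.1 k (by omega)).trans ih

lemma le_first (hP : IsPartition μ) (i : ℕ) : μ i ≤ μ 1 := by
  rcases Nat.eq_zero_or_pos i with rfl | hi
  · simp [hP.1]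
  · exact hP.antitone_s10 le_rfl hi

lemma le_conj_iff (hP : IsPartition μ) {j k : ℕ} (hj : 1 ≤ j) (hk : 1 ≤ k) :
    k ≤ conj μ j ↔ j ≤ μ k := by
  have hconj : conj μ j = {i | 1 ≤ i ∧ j ≤ μ i}.ncard := rfl
  constructor
  · intro hkc
    by_contra hlt
    have hsub : {i | 1 ≤ i ∧ j ≤ μ i} ⊆ Set.Ico 1 k := fun i ⟨hi, hji⟩ =>
      ⟨hi, by by_contra hki; have := hP.antitone_s10 hk (not_lt.1 hki); omega⟩
    have := Set.ncard_le_ncard hsub (Set.finite_Ico 1 k)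
    rw [← hconj, Set.ncard_Ico_nat] at this
    omega
  · intro hjk
    obtain ⟨N, hN⟩ := hP.2.2
    have hfin : {i | 1 ≤ i ∧ j ≤ μ i}.Finite := (Set.finite_Iio N).subset fun i ⟨_, hji⟩ => by
      by_contra hiN; have := hN i (not_lt.1 hiN); omega
    have hsub : Set.Icc 1 k ⊆ {i | 1 ≤ i ∧ j ≤ μ i} := fun i ⟨hi, hik⟩ =>
      ⟨hi, hjk.trans (hP.antitone_s10 hi hik)⟩
    have := Set.ncard_le_ncard hsub hfin
    rw [← hconj, Set.ncard_Icc_nat] at this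
    omega

lemma eq_zero_of_conj_one_lt (hP : IsPartition μ) {i : ℕ} (hi : conj μ 1 < i) : μ i = 0 := by
  by_contra h
  have := (hP.le_conj_iff le_rfl (k := i) (by omega)).2 (by omega)
  omega

lemma exists_last_repeat (hP : IsPartition μ) (hμ : TwoSingular μ) :
    ∃ r, RepeatsAt μ r ∧ ∀ k, RepeatsAt μ k → k ≤ r := by
  obtain ⟨N, hN⟩ := hP.2.2
  have hfin : {k | RepeatsAt μ k}.Finite := (Set.finite_Iio N).subset fun k ⟨_, _, hk⟩ => by
    by_contra hkN; have := hN k (not_lt.1 hkN); omega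
  exact Set.exists_max_image _ id hfin hμ

lemma repeatsAt_of_conj_add_two_le (hP : IsPartition μ) {j : ℕ} (hj : 1 ≤ j)
    (hjump : conj μ (j + 1) + 2 ≤ conj μ j) : RepeatsAt μ (conj μ (j + 1) + 1) := by
  set q := conj μ (j + 1)
  have hq1 : j ≤ μ (q + 1) := (hP.le_conj_iff hj (by omega)).1 (by omega)
  have hq2 : j ≤ μ (q + 2) := (hP.le_conj_iff hj (by omega)).1 hjump
  have hq1' : μ (q + 1) < j + 1 := by
    by_contra h
    have := (hP.le_conj_iff (by omega) (by omega)).2 (not_lt.1 h)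
    omega
  have hmono : μ (q + 2) ≤ μ (q + 1) := hP.2.1 (q + 1) (by omega)
  exact ⟨by omega, show μ (q + 1) = μ (q + 2) by omega, by omega⟩

end IsPartition

lemma le_add_one_of_not_broken {μ : ℕ → ℕ} (hμ : ¬ Broken μ) {r k : ℕ} (hr : RepeatsAt μ r)
    (hk : 1 ≤ k) (hkr : k < r) : μ k ≤ μ (k + 1) + 1 := by
  obtain ⟨_, hrr, hrpos⟩ := hr
  by_contra h
  exact hμ ⟨k + 1, r + 1, by omega, by omega, by simpa using (by omega : μ (k + 1) + 1 < μ k),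
    by simpa using hrr, by omega⟩

namespace IsECore

variable {e : ℕ} {μ : ℕ → ℕ}

lemma sub_add_one_lt_of_Icc_subset (hμ : IsECore e μ) (he : 0 < e) {u v : ℤ}
    (huv : Set.Icc u v ⊆ hookLengths μ) : v - u + 1 < e := by
  by_contra h
  have hpos : (0 : ℤ) < e := by exact_mod_cast he
  -- `u + (-u) % e` is the least multiple of `e` that is at least `u`.
  have hmod := Int.emod_nonneg (-u) hpos.ne'
  have hlt := Int.emod_lt_of_pos (-u) hpos
  obtain ⟨i, j, hij, hx⟩ := huv (Set.mem_Icc.2 ⟨by omega, by omega⟩ : u + (-u) % e ∈ Set.Icc u v)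
  refine hμ i j hij ⟨-((-u) / e), ?_⟩
  rw [hx, Int.emod_def]
  ring

lemma sub_add_two_lt (hμ : IsECore e μ) (he : 0 < e) {f : ℕ → ℤ} {a b : ℕ} (hab : a ≤ b)
    (hstep : ∀ k, a ≤ k → k < b → f k ≤ f (k + 1) + 2)
    (hmem : ∀ k, a ≤ k → k ≤ b → f k ∈ hookLengths μ ∧ f k + 1 ∈ hookLengths μ) :
    f a - f b + 2 < e := by
  have := hμ.sub_add_one_lt_of_Icc_subset he (u := f b) (v := f a + 1) fun x ⟨hxb, hxa⟩ => by
    obtain ⟨k, hak, hkb, rfl | rfl⟩ := exists_eq_or_eq_add_one_of_le_add_two hab hstep hxb hxa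
    exacts [(hmem k hak hkb).1, (hmem k hak hkb).2]
  omega

lemma add_conj_one_sub_lt (hμ : IsECore e μ) (he : 0 < e) (hP : IsPartition μ) {r : ℕ}
    (hr : RepeatsAt μ r) (hlast : ∀ k, RepeatsAt μ k → k ≤ r) :
    (μ r : ℤ) + conj μ 1 - r < e := by
  obtain ⟨hr1, hrr, hrpos⟩ := hr
  have hnode : ∀ j, 1 ≤ j → j ≤ μ r → IsNode μ r j ∧ IsNode μ (r + 1) j :=
    fun j hj hjr => ⟨⟨hr1, hj, hjr⟩, ⟨by omega, hj, by omega⟩⟩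
  have hstep : ∀ j, 1 ≤ j → j < μ r → conj μ j ≤ conj μ (j + 1) + 1 := by
    intro j hj hjr
    by_contra hjump
    have hq := (hP.le_conj_iff (j := j + 1) (k := r + 1) (by omega) (by omega)).2 (by omega)
    have := hlast _ (hP.repeatsAt_of_conj_add_two_le hj (by omega))
    omega
  have hlastRow : conj μ (μ r) ≤ r + 1 := by
    by_contra h
    have hlong := (hP.le_conj_iff hrpos (k := r + 2) (by omega)).1 (by omega)
    have hmono : μ (r + 2) ≤ μ (r + 1) := hP.2.1 (r + 1) (by omega)
    have := hlast (r + 1) ⟨by omega, show μ (r + 1) = μ (r + 2) by omega, by omega⟩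
    omega
  have := hμ.sub_add_two_lt he (f := fun j => hook μ (r + 1) j) (a := 1) hrpos
    (fun j hj hjr => by have := hstep j hj hjr; simp only [hook]; omega)
    (fun j hj hjr => ⟨⟨r + 1, j, (hnode j hj hjr).2, rfl⟩,
      ⟨r, j, (hnode j hj hjr).1, by simp only [hook]; omega⟩⟩)
  simp only [hook] at this
  omega

lemma first_sub_add_lt (hμ : IsECore e μ) (he : 0 < e) (hP : IsPartition μ) (hB : ¬ Broken μ)
    {r j : ℕ} (hr : RepeatsAt μ r) (hcol : RepeatsAt (conj μ) j) :
    (μ 1 : ℤ) - μ r + r + 1 < e := by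
  obtain ⟨hj, hjj, hjpos⟩ := hcol
  set h := conj μ j
  have hlong : j + 1 ≤ μ h := (hP.le_conj_iff (by omega) hjpos).1 (by omega)
  have hshort : μ (h + 1) < j := by
    by_contra hc
    have := (hP.le_conj_iff hj (by omega)).2 (not_lt.1 hc)
    omega
  have hrh : r ≤ h := by
    by_contra hc
    have := le_add_one_of_not_broken hB hr hjpos (by omega)
    omega
  have hnode : ∀ k, 1 ≤ k → k ≤ r → IsNode μ k j ∧ IsNode μ k (j + 1) := fun k hk hkr =>
    have := (hP.le_conj_iff (by omega) hk).1 (by omega : k ≤ conj μ (j + 1))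
    ⟨⟨hk, hj, by omega⟩, ⟨hk, by omega, this⟩⟩
  have := hμ.sub_add_two_lt he (f := fun k => hook μ k (j + 1)) (a := 1) hr.1
    (fun k hk hkr => by
      have := le_add_one_of_not_broken hB hr hk hkr; simp only [hook]; omega)
    (fun k hk hkr => ⟨⟨k, j + 1, (hnode k hk hkr).2, rfl⟩,
      ⟨k, j, (hnode k hk hkr).1, by simp only [hook]; omega⟩⟩)
  simp only [hook] at this
  omega

lemma first_add_conj_one_lt (hμ : IsECore e μ) (he : 0 < e) (hP : IsPartition μ)
    (hB : ¬ Broken μ) (hrow : TwoSingular μ) (hcol : TwoSingular (conj μ)) :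
    μ 1 + conj μ 1 + 1 < 2 * e := by
  obtain ⟨r, hr, hlast⟩ := hP.exists_last_repeat hrow
  obtain ⟨j, hj⟩ := hcol
  have := hμ.add_conj_one_sub_lt he hP hr hlast
  have := hμ.first_sub_add_lt he hP hB hr hj
  omega

end IsECore

/-- For each prime `p`, there are only finitely many unbroken doubly-singular
`2p`-cores. -/
theorem finitely_many_unbroken_doublySingular_cores (p : ℕ) (hp : p.Prime) :
    {μ : ℕ → ℕ | IsPartition μ ∧ ¬ Broken μ ∧ TwoSingular μ ∧
      TwoSingular (conj μ) ∧ IsECore (2 * p) μ}.Finite := by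
  refine (finite_setOf_forall_lt_and_eq_zero (4 * p)).subset ?_
  rintro μ ⟨hP, hB, hrow, hcol, hcore⟩
  have hbox := hcore.first_add_conj_one_lt (by linarith [hp.pos]) hP hB hrow hcol
  exact fun i => ⟨(hP.le_first i).trans_lt (by omega),
    fun hi => hP.eq_zero_of_conj_one_lt (by omega)⟩
end
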